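/- arXiv:1608.03050 — 3 statements merged into one kernel-verified Lean document; each statement's English description precedes it below -/
import Mathlib

section
/- Let (M,g) be an m-dimensional Riemannian manifold satisfying conditions H₁ and H₂, i.e. ρ_{ij} = Λ₁ g_{ij} and 𝔖(R_{aijb}R_{bkla}) = Λ₂ 𝔖(g_{ij}g_{kl}) for constants Λ₁, Λ₂, where 𝔖 denotes the sum over all permutations of free indices. Then Λ₂ = (1/(2m(m+2)))(2τ²/m + 3|R|²), where |R|² = R_{abcd}R_{abcd}. -/
open scoped BigOperators

/-- Kronecker delta (the metric in a local orthonormal frame). -/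
def kd {m : ℕ} (i j : Fin m) : ℝ := if i = j then 1 else 0

/-- The pointwise curvature data (the Riemann curvature tensor together with its
first and second covariant derivatives, expressed in a local orthonormal frame)
of an `m`-dimensional Riemannian manifold `M`, subject to the standard
symmetries, the first and second Bianchi identities and the Ricci commutation
identity.  The sign convention is `R(X,Y)Z = [∇_X,∇_Y]Z − ∇_{[X,Y]}Z`. -/
structure RiemannModel (m : ℕ) (M : Type) where
  R : M → Fin m → Fin m → Fin m → Fin m → ℝ
  dR : M → Fin m → Fin m → Fin m → Fin m → Fin m → ℝ
  d2R : M → Fin m → Fin m → Fin m → Fin m → Fin m → Fin m → ℝ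
  R_antisymm₁ : ∀ p a b c d, R p b a c d = - R p a b c d
  R_antisymm₂ : ∀ p a b c d, R p a b d c = - R p a b c d
  R_pairSymm : ∀ p a b c d, R p c d a b = R p a b c d
  R_bianchi₁ : ∀ p a b c d, R p a b c d + R p b c a d + R p c a b d = 0
  dR_antisymm₁ : ∀ p a b c d e, dR p b a c d e = - dR p a b c d e
  dR_antisymm₂ : ∀ p a b c d e, dR p a b d c e = - dR p a b c d e
  dR_pairSymm : ∀ p a b c d e, dR p c d a b e = dR p a b c d e
  dR_bianchi₁ : ∀ p a b c d e, dR p a b c d e + dR p b c a d e + dR p c a b d e = 0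
  bianchi₂ : ∀ p a b c d e, dR p a b c d e + dR p a b d e c + dR p a b e c d = 0
  d2R_antisymm₁ : ∀ p a b c d e f, d2R p b a c d e f = - d2R p a b c d e f
  d2R_antisymm₂ : ∀ p a b c d e f, d2R p a b d c e f = - d2R p a b c d e f
  d2R_pairSymm : ∀ p a b c d e f, d2R p c d a b e f = d2R p a b c d e f
  d2R_bianchi₂ : ∀ p a b c d e f,
    d2R p a b c d e f + d2R p a b d e c f + d2R p a b e c d f = 0
  ricci_comm : ∀ p a b c d e f,
    d2R p a b c d e f - d2R p a b c d f e =
      ∑ u, (R p e f a u * R p u b c d + R p e f b u * R p a u c d +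
            R p e f c u * R p a b u d + R p e f d u * R p a b c u)

namespace RiemannModel

variable {m : ℕ} {M : Type} (V : RiemannModel m M)

/-- Ricci tensor `ρ_{ij} = R_{aija}`. -/
def ric (p : M) (i j : Fin m) : ℝ := ∑ a, V.R p a i j a

/-- Scalar curvature `τ`. -/
def scal (p : M) : ℝ := ∑ i, V.ric p i i

/-- `|R|² = R_{abcd}R_{abcd}`. -/
def normR2 (p : M) : ℝ := ∑ a, ∑ b, ∑ c, ∑ d, (V.R p a b c d) ^ 2

/-- `|ρ|² = ρ_{ab}ρ_{ab}`. -/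
def normRic2 (p : M) : ℝ := ∑ a, ∑ b, (V.ric p a b) ^ 2

/-- `|∇R|² = R_{abcd;e}R_{abcd;e}`. -/
def normDR2 (p : M) : ℝ := ∑ a, ∑ b, ∑ c, ∑ d, ∑ e, (V.dR p a b c d e) ^ 2

/-- `R_{iabc}R_{jabc}`. -/
def RR2 (p : M) (i j : Fin m) : ℝ := ∑ a, ∑ b, ∑ c, V.R p i a b c * V.R p j a b c

/-- `R̂ = R_{abcd}R_{abuv}R_{cduv}`. -/
def Rhat (p : M) : ℝ :=
  ∑ a, ∑ b, ∑ c, ∑ d, ∑ u, ∑ v, V.R p a b c d * V.R p a b u v * V.R p c d u v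

/-- `R̊ = R_{abcd}R_{aucv}R_{budv}`. -/
def Rring (p : M) : ℝ :=
  ∑ a, ∑ b, ∑ c, ∑ d, ∑ u, ∑ v, V.R p a b c d * V.R p a u c v * V.R p b u d v

/-- `R̂_{ij} = R_{ibac}R_{jbuv}R_{acuv}`. -/
def RhatT (p : M) (i j : Fin m) : ℝ :=
  ∑ a, ∑ b, ∑ c, ∑ u, ∑ v, V.R p i b a c * V.R p j b u v * V.R p a c u v

/-- `R̊_{ij} = R_{iabc}R_{jubv}R_{aucv}`. -/
def RringT (p : M) (i j : Fin m) : ℝ :=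
  ∑ a, ∑ b, ∑ c, ∑ u, ∑ v, V.R p i a b c * V.R p j u b v * V.R p a u c v

/-- `Ř_{ij} = R_{iuvj}R_{abcu}R_{abcv}`. -/
def RcheckT (p : M) (i j : Fin m) : ℝ :=
  ∑ u, ∑ v, ∑ a, ∑ b, ∑ c, V.R p i u v j * V.R p a b c u * V.R p a b c v

/-- `A_{ij} = R_{abcd;i}R_{abcd;j}`. -/
def At (p : M) (i j : Fin m) : ℝ :=
  ∑ a, ∑ b, ∑ c, ∑ d, V.dR p a b c d i * V.dR p a b c d j

/-- `B_{ij} = R_{ibcd;a}R_{jbcd;a}`. -/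
def Bt (p : M) (i j : Fin m) : ℝ :=
  ∑ a, ∑ b, ∑ c, ∑ d, V.dR p i b c d a * V.dR p j b c d a

/-- Second covariant derivative of the Ricci tensor, `ρ_{ij;ab}`. -/
def ric2 (p : M) (i j a b : Fin m) : ℝ := ∑ u, V.d2R p u i j u a b

/-- `Q_{ijkl} = R_{aijb}R_{bkla}`. -/
def Q (p : M) (i j k l : Fin m) : ℝ := ∑ a, ∑ b, V.R p a i j b * V.R p b k l a

/-- The integrand of condition `H₃`:
`32 R_{aijb}R_{bklc}R_{cuva} − 9 R_{aijb;k}R_{buva;l}`. -/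
def C (p : M) (i j k l u v : Fin m) : ℝ :=
  32 * (∑ a, ∑ b, ∑ c, V.R p a i j b * V.R p b k l c * V.R p c u v a)
    - 9 * (∑ a, ∑ b, V.dR p a i j b k * V.dR p b u v a l)

/-- `𝔖(g_{ij}g_{kl})` : symmetrization over all permutations of `i,j,k,l`. -/
def symG2 {m : ℕ} (i j k l : Fin m) : ℝ :=
  ∑ σ : Equiv.Perm (Fin 4),
    kd (![i,j,k,l] (σ 0)) (![i,j,k,l] (σ 1)) *
      kd (![i,j,k,l] (σ 2)) (![i,j,k,l] (σ 3))

/-- `𝔖(R_{aijb}R_{bkla})` : symmetrization over all permutations of `i,j,k,l`. -/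
def symQ (p : M) (i j k l : Fin m) : ℝ :=
  ∑ σ : Equiv.Perm (Fin 4),
    V.Q p (![i,j,k,l] (σ 0)) (![i,j,k,l] (σ 1)) (![i,j,k,l] (σ 2)) (![i,j,k,l] (σ 3))

/-- `𝔖(g_{ij}g_{kl}g_{uv})`. -/
def symG3 {m : ℕ} (i j k l u v : Fin m) : ℝ :=
  ∑ σ : Equiv.Perm (Fin 6),
    kd (![i,j,k,l,u,v] (σ 0)) (![i,j,k,l,u,v] (σ 1)) *
      kd (![i,j,k,l,u,v] (σ 2)) (![i,j,k,l,u,v] (σ 3)) *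
        kd (![i,j,k,l,u,v] (σ 4)) (![i,j,k,l,u,v] (σ 5))

/-- `𝔖(32R_{aijb}R_{bklc}R_{cuva} − 9R_{aijb;k}R_{buva;l})`. -/
def symC (p : M) (i j k l u v : Fin m) : ℝ :=
  ∑ σ : Equiv.Perm (Fin 6),
    V.C p (![i,j,k,l,u,v] (σ 0)) (![i,j,k,l,u,v] (σ 1)) (![i,j,k,l,u,v] (σ 2))
      (![i,j,k,l,u,v] (σ 3)) (![i,j,k,l,u,v] (σ 4)) (![i,j,k,l,u,v] (σ 5))

/-- Ledger's condition `H₁`. -/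
def H1 : Prop := ∃ Λ : ℝ, ∀ p i j, V.ric p i j = Λ * kd i j

/-- Ledger's condition `H₂`. -/
def H2 : Prop := ∃ Λ : ℝ, ∀ p i j k l, V.symQ p i j k l = Λ * symG2 i j k l

/-- Ledger's condition `H₃`. -/
def H3 : Prop :=
  ∃ Λ : ℝ, ∀ p i j k l u v, V.symC p i j k l u v = Λ * symG3 i j k l u v

/-- The Einstein condition `ρ_{ij} = (τ/m) g_{ij}`. -/
def einstein : Prop := ∀ p i j, V.ric p i j = V.scal p / m * kd i j

end RiemannModel

/-!
Contract `H₂` with `g_{ij} g_{kl}`. Of the 24 permutations, the contraction of each term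
`Q_{σ(ijkl)}` is one of the three traces `Q_{iikk}`, `Q_{ikik}`, `Q_{ikki}`, each occurring 8 times.
These traces are `|ρ|²`, `|R|²/2` (by the first Bianchi identity) and `|R|²`, while the same count
gives `8m(m + 2)` on the right-hand side; under `H₁` one has `|ρ|² = τ²/m`.
-/

open Finset

lemma sum_perm_fin_four {R : Type*} [AddCommMonoid R] (G : Fin 4 → Fin 4 → Fin 4 → Fin 4 → R) :
    ∑ σ : Equiv.Perm (Fin 4), G (σ 0) (σ 1) (σ 2) (σ 3) =
      G 0 1 2 3 + G 0 1 3 2 + G 0 2 1 3 + G 0 2 3 1 + G 0 3 1 2 + G 0 3 2 1 +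
      G 1 0 2 3 + G 1 0 3 2 + G 1 2 0 3 + G 1 2 3 0 + G 1 3 0 2 + G 1 3 2 0 +
      G 2 0 1 3 + G 2 0 3 1 + G 2 1 0 3 + G 2 1 3 0 + G 2 3 0 1 + G 2 3 1 0 +
      G 3 0 1 2 + G 3 0 2 1 + G 3 1 0 2 + G 3 1 2 0 + G 3 2 0 1 + G 3 2 1 0 := by
  let tuple : Equiv.Perm (Fin 4) → Fin 4 × Fin 4 × Fin 4 × Fin 4 := fun σ => (σ 0, σ 1, σ 2, σ 3)
  have tuple_inj : Function.Injective tuple := by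
    intro σ τ h
    simp only [tuple, Prod.mk.injEq] at h
    ext x
    fin_cases x <;> simp [h.1, h.2.1, h.2.2.1, h.2.2.2]
  have tuple_image : univ.image tuple =
      {(0,1,2,3), (0,1,3,2), (0,2,1,3), (0,2,3,1), (0,3,1,2), (0,3,2,1),
        (1,0,2,3), (1,0,3,2), (1,2,0,3), (1,2,3,0), (1,3,0,2), (1,3,2,0),
        (2,0,1,3), (2,0,3,1), (2,1,0,3), (2,1,3,0), (2,3,0,1), (2,3,1,0),
        (3,0,1,2), (3,0,2,1), (3,1,0,2), (3,1,2,0), (3,2,0,1), (3,2,1,0)} := by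
    decide
  rw [← sum_image (f := fun t => G t.1 t.2.1 t.2.2.1 t.2.2.2) tuple_inj.injOn, tuple_image]
  repeat rw [sum_insert (by decide)]
  rw [sum_singleton]
  abel

section Symmetrization

variable {m : ℕ} {R : Type*} [AddCommMonoid R]

lemma sum_perm_fin_four_iikk (T : Fin m → Fin m → Fin m → Fin m → R) (i k : Fin m) :
    ∑ σ : Equiv.Perm (Fin 4),
      T (![i,i,k,k] (σ 0)) (![i,i,k,k] (σ 1)) (![i,i,k,k] (σ 2)) (![i,i,k,k] (σ 3)) =
    4 • (T i i k k + T i k i k + T i k k i + T k i i k + T k i k i + T k k i i) := by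
  rw [sum_perm_fin_four (fun a b c d => T (![i,i,k,k] a) (![i,i,k,k] b) (![i,i,k,k] c) (![i,i,k,k] d))]
  simp only [Matrix.cons_val_zero, Matrix.cons_val_one, Matrix.cons_val_two, Matrix.cons_val_three,
    Matrix.head_cons, Matrix.tail_cons]
  abel

lemma sum_sum_sum_perm_fin_four_iikk (T : Fin m → Fin m → Fin m → Fin m → R) :
    ∑ i, ∑ k, ∑ σ : Equiv.Perm (Fin 4),
      T (![i,i,k,k] (σ 0)) (![i,i,k,k] (σ 1)) (![i,i,k,k] (σ 2)) (![i,i,k,k] (σ 3)) =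
    8 • (∑ i, ∑ k, T i i k k + ∑ i, ∑ k, T i k i k + ∑ i, ∑ k, T i k k i) := by
  simp only [sum_perm_fin_four_iikk, ← smul_sum, sum_add_distrib]
  rw [sum_comm (f := fun i k => T k i i k), sum_comm (f := fun i k => T k i k i),
    sum_comm (f := fun i k => T k k i i)]
  abel

end Symmetrization

lemma sum_congr_four {ι R : Type*} [Fintype ι] [AddCommMonoid R] {f g : ι → ι → ι → ι → R}
    (h : ∀ a b c d, f a b c d = g a b c d) :
    ∑ a, ∑ b, ∑ c, ∑ d, f a b c d = ∑ a, ∑ b, ∑ c, ∑ d, g a b c d := by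
  simp only [h]

namespace RiemannModel

variable {m : ℕ} {M : Type} (V : RiemannModel m M) (p : M)

lemma R_swap_both (a b c d : Fin m) : V.R p b a d c = V.R p a b c d := by
  rw [V.R_antisymm₁, V.R_antisymm₂, neg_neg]

lemma sum_R_contract_middle (a b : Fin m) : ∑ c, V.R p a c c b = V.ric p a b :=
  sum_congr rfl fun c _ => V.R_swap_both p c a b c

lemma ric_symm (a b : Fin m) : V.ric p a b = V.ric p b a :=
  sum_congr rfl fun c _ => by rw [V.R_pairSymm, V.R_swap_both]

lemma sum_R_mul_R_swap_middle :
    ∑ a, ∑ b, ∑ c, ∑ d, V.R p a b c d * V.R p a c b d = V.normR2 p / 2 := by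
  set T := ∑ a, ∑ b, ∑ c, ∑ d, V.R p a b c d * V.R p a c b d
  -- `R_{acbd} = R_{abcd} + R_{bcad}` by Bianchi, and the second term contributes `-T`.
  have hT : T = V.normR2 p + ∑ a, ∑ b, ∑ c, ∑ d, V.R p a b c d * V.R p b c a d := by
    simp only [T, normR2, ← sum_add_distrib]
    refine sum_congr_four fun a b c d => ?_
    have := V.R_bianchi₁ p a b c d
    rw [V.R_antisymm₁ p a c b d] at this
    linear_combination -V.R p a b c d * this
  have hcross : ∑ a, ∑ b, ∑ c, ∑ d, V.R p a b c d * V.R p b c a d = -T := calc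
    _ = ∑ a, ∑ b, ∑ c, ∑ d, V.R p a b c d * V.R p a d b c :=
      sum_congr_four fun a b c d => by rw [V.R_pairSymm p a d b c]
    _ = ∑ a, ∑ b, ∑ c, ∑ d, V.R p a b d c * V.R p a c b d :=
      sum_congr rfl fun a _ => sum_congr rfl fun b _ => sum_comm
    _ = ∑ a, ∑ b, ∑ c, ∑ d, -(V.R p a b c d * V.R p a c b d) :=
      sum_congr_four fun a b c d => by rw [V.R_antisymm₂, neg_mul]
    _ = -T := by simp only [T, sum_neg_distrib]
  linarith

lemma sum_Q_iikk : ∑ i, ∑ k, V.Q p i i k k = V.normRic2 p := calc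
  _ = ∑ a, ∑ b, (∑ i, V.R p a i i b) * ∑ k, V.R p b k k a := by
    simp only [Q, sum_mul_sum]
    rw [sum_comm_cycle]
    exact sum_congr rfl fun a _ => sum_comm_cycle
  _ = ∑ a, ∑ b, V.ric p a b * V.ric p b a := by simp only [sum_R_contract_middle]
  _ = V.normRic2 p :=
    sum_congr rfl fun a _ => sum_congr rfl fun b _ => by rw [V.ric_symm p b a, sq]

lemma sum_Q_ikik : ∑ i, ∑ k, V.Q p i k i k = V.normR2 p / 2 := by
  simp only [Q]
  rw [sum_comm_cycle, ← V.sum_R_mul_R_swap_middle p]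
  exact sum_congr_four fun a i k b => by rw [V.R_pairSymm p k a b i, V.R_swap_both p a k i b]

lemma sum_Q_ikki : ∑ i, ∑ k, V.Q p i k k i = V.normR2 p := by
  simp only [Q]
  rw [sum_comm_cycle]
  exact sum_congr_four fun a i k b => by rw [V.R_pairSymm p i a b k, V.R_swap_both p a i k b, sq]

lemma sum_symQ_diag : ∑ i, ∑ k, V.symQ p i i k k = 8 * V.normRic2 p + 12 * V.normR2 p := calc
  _ = 8 • (∑ i, ∑ k, V.Q p i i k k + ∑ i, ∑ k, V.Q p i k i k + ∑ i, ∑ k, V.Q p i k k i) :=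
    sum_sum_sum_perm_fin_four_iikk (V.Q p)
  _ = 8 * V.normRic2 p + 12 * V.normR2 p := by
    rw [sum_Q_iikk, sum_Q_ikik, sum_Q_ikki, nsmul_eq_mul]
    ring

lemma sum_symG2_diag : ∑ i : Fin m, ∑ k : Fin m, symG2 i i k k = 8 * m * (m + 2) := calc
  _ = 8 • (∑ i : Fin m, ∑ k : Fin m, kd i i * kd k k + ∑ i : Fin m, ∑ k : Fin m, kd i k * kd i k
      + ∑ i : Fin m, ∑ k : Fin m, kd i k * kd k i) :=
    sum_sum_sum_perm_fin_four_iikk (fun a b c d => kd a b * kd c d)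
  _ = 8 • ((m : ℝ) * m + m + m) := by simp [kd]
  _ = 8 * m * (m + 2) := by
    rw [nsmul_eq_mul]
    ring

lemma normRic2_eq_scal_sq_div {Λ : ℝ} (h : ∀ i j, V.ric p i j = Λ * kd i j) :
    V.normRic2 p = V.scal p ^ 2 / m := by
  have hscal : V.scal p = m * Λ := by simp [scal, h, kd]
  have hnorm : V.normRic2 p = m * Λ ^ 2 := by simp [normRic2, h, kd]
  rcases eq_or_ne (m : ℝ) 0 with hm | hm
  · simp [hnorm, hscal, hm]
  · rw [hnorm, hscal]
    field_simp

end RiemannModel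

/-- under `H₁` and `H₂`,
`Λ₂ = (1/(2m(m+2)))(2τ²/m + 3|R|²)`. -/
theorem lambda2_formula {m : ℕ} (hm : 0 < m) {M : Type}
    (V : RiemannModel m M) (Λ₁ Λ₂ : ℝ)
    (h1 : ∀ p i j, V.ric p i j = Λ₁ * kd i j)
    (h2 : ∀ p i j k l, V.symQ p i j k l = Λ₂ * RiemannModel.symG2 i j k l) :
    ∀ p : M,
      Λ₂ = 1 / (2 * m * (m + 2)) * (2 * (V.scal p) ^ 2 / m + 3 * V.normR2 p) := by
  intro p
  have contraction : Λ₂ * (8 * m * (m + 2)) = 8 * V.normRic2 p + 12 * V.normR2 p := by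
    rw [← V.sum_symQ_diag p, ← RiemannModel.sum_symG2_diag]
    simp only [h2, mul_sum]
  rw [V.normRic2_eq_scal_sq_div p (h1 p)] at contraction
  have hm0 : (m : ℝ) ≠ 0 := Nat.cast_ne_zero.mpr hm.ne'
  field_simp at contraction ⊢
  linear_combination contraction / 4
end

section
/- Transvecting the symmetric 2-tensor identity H₂, namely g_{kl}·𝔖(R_{aijb}R_{bkla}): the full symmetrization contracted with g^{kl} equals 2(τ/m)² g_{ij} + 3 R_{iabc}R_{jabc} when ρ_{ij} = (τ/m)g_{ij}, i.e. g^{kl}[R_{aijb}R_{aklb}+R_{aijb}R_{alkb}+R_{aikb}R_{ajlb}+R_{aikb}R_{aljb}+R_{ailb}R_{akjb}+R_{ailb}R_{ajkb}] = 2(τ/m)²g_{ij} + 3R_{iabc}R_{jabc}. -/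
open scoped BigOperators

/-! The six terms pair up into three sums. Contracting `R_{akkb}` gives the Ricci tensor, so the
first is `(τ/m)² g_{ij}`; the second is `R_{iabc}R_{jabc}` after reordering indices; the third is
half of that, because the first Bianchi identity on its second factor splits it into
`R_{iabc}R_{jabc}` minus a sum which reindexing identifies with the third sum itself. -/

namespace RiemannModel

variable {m : ℕ} {M : Type} (V : RiemannModel m M) (p : M)

theorem sum_R_diag (a b : Fin m) : ∑ k, V.R p a k k b = V.ric p b a :=
  Finset.sum_congr rfl fun k _ => (V.R_pairSymm p a k k b).symm

theorem sum_R_mul_sum_R_diag_of_ric_eq {Λ : ℝ} (hric : ∀ i j, V.ric p i j = Λ * kd i j)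
    (i j : Fin m) :
    ∑ a, ∑ b, ∑ k, V.R p a i j b * V.R p a k k b = Λ ^ 2 * kd i j :=
  calc ∑ a, ∑ b, ∑ k, V.R p a i j b * V.R p a k k b
      = ∑ a, ∑ b, V.R p a i j b * (Λ * kd b a) := by
        simp only [← Finset.mul_sum, sum_R_diag, hric]
    _ = Λ * V.ric p i j := by
        simp [kd, ric, Finset.mul_sum, mul_comm]
    _ = Λ ^ 2 * kd i j := by rw [hric]; ring

theorem sum_R_mul_R_eq_RR2 (i j : Fin m) :
    ∑ a, ∑ b, ∑ k, V.R p a i k b * V.R p a j k b = V.RR2 p i j := by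
  refine Finset.sum_congr rfl fun a _ => ?_
  rw [Finset.sum_comm]
  refine Finset.sum_congr rfl fun b _ => Finset.sum_congr rfl fun c _ => ?_
  rw [V.R_antisymm₁ p i a b c, V.R_antisymm₁ p j a b c]
  ring

theorem two_mul_sum_R_mul_R_cross (i j : Fin m) :
    2 * ∑ a, ∑ b, ∑ k, V.R p a i k b * V.R p a k j b = V.RR2 p i j := by
  have bianchi (a b k : Fin m) :
      V.R p a k j b = V.R p a j k b - V.R p k j a b := by
    linarith [V.R_bianchi₁ p a k j b, V.R_antisymm₁ p a j k b]
  have reindex : ∑ a, ∑ b, ∑ k, V.R p a i k b * V.R p k j a b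
      = ∑ a, ∑ b, ∑ k, V.R p a i k b * V.R p a k j b := by
    refine Finset.sum_congr rfl fun a _ => ?_
    rw [Finset.sum_comm]
    refine Finset.sum_congr rfl fun b _ => Finset.sum_congr rfl fun k _ => ?_
    rw [V.R_antisymm₂ p a i b k, V.R_antisymm₁ p j b a k, V.R_pairSymm p a k j b]
    ring
  have split : ∑ a, ∑ b, ∑ k, V.R p a i k b * V.R p a k j b
      = ∑ a, ∑ b, ∑ k, V.R p a i k b * V.R p a j k b
        - ∑ a, ∑ b, ∑ k, V.R p a i k b * V.R p k j a b := by
    simp only [bianchi, mul_sub, Finset.sum_sub_distrib]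
  rw [← V.sum_R_mul_R_eq_RR2]
  linarith

end RiemannModel

theorem transvected_H2_general {m : ℕ} {M : Type}
    (V : RiemannModel m M)
    (heins : ∀ p i j, V.ric p i j = V.scal p / m * kd i j) :
    ∀ (p : M) (i j : Fin m),
      (∑ a, ∑ b, ∑ k,
        (V.R p a i j b * V.R p a k k b + V.R p a i j b * V.R p a k k b +
         V.R p a i k b * V.R p a j k b + V.R p a i k b * V.R p a k j b +
         V.R p a i k b * V.R p a k j b + V.R p a i k b * V.R p a j k b)) =
      2 * (V.scal p / m) ^ 2 * kd i j + 3 * V.RR2 p i j := by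
  intro p i j
  have cross := V.two_mul_sum_R_mul_R_cross p i j
  simp only [Finset.sum_add_distrib]
  rw [V.sum_R_mul_sum_R_diag_of_ric_eq p (heins p), V.sum_R_mul_R_eq_RR2]
  linarith

/-- transvecting the symmetrized identity `𝔖(R_{aijb}R_{bkla})`
with `g^{kl}` on an Einstein manifold gives
`2(τ/m)² g_{ij} + 3 R_{iabc}R_{jabc}`. -/
theorem transvected_H2 {m : ℕ} (hm : 0 < m) {M : Type}
    (V : RiemannModel m M)
    (heins : ∀ p i j, V.ric p i j = V.scal p / m * kd i j) :
    ∀ (p : M) (i j : Fin m),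
      (∑ a, ∑ b, ∑ k,
        (V.R p a i j b * V.R p a k k b + V.R p a i j b * V.R p a k k b +
         V.R p a i k b * V.R p a j k b + V.R p a i k b * V.R p a k j b +
         V.R p a i k b * V.R p a k j b + V.R p a i k b * V.R p a j k b)) =
      2 * (V.scal p / m) ^ 2 * kd i j + 3 * V.RR2 p i j :=
  transvected_H2_general V heins
end

section
/- Let R be the algebraic curvature tensor on ℝ⁵ given in the Nikolayevsky basis by the components determined by parameters μ,ν (R₁₂₁₂=R₁₃₁₃=R₂₃₂₃=R₂₄₂₄=R₃₄₃₄=μ−ν, R₁₄₁₄=μ−4ν, R₁₅₁₅=R₄₅₄₅=μ, R₂₅₂₅=R₃₅₃₅=μ−3ν, R₁₂₃₄=ν, R₁₂₃₅=√3ν, R₁₃₂₄=−ν, R₁₃₂₅=√3ν, R₁₄₂₃=−2ν, R₂₄₂₅=√3ν, R₃₄₃₅=−√3ν, all others zero up to symmetry). Then τ = −20μ + 30ν and R_{iabc}R_{jabc} = (8μ² − 24μν + 60ν²)δ_{ij}, hence |R|² = 40μ² − 120μν + 300ν². -/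
/-!
Each identity is a finite computation in the basis `e₁, …, e₅`: expanding the sums and the
Kronecker deltas leaves polynomial identities in `μ`, `ν`, `√3` that hold modulo `√3 ^ 2 = 3`.
The norm needs no separate computation, since `|R|²` is the trace of `R_{iabc}R_{jabc}`.
-/

open scoped BigOperators

namespace Alg

variable {n : ℕ}

/-- Ricci tensor `ρ_{ij} = R_{aija}` of an algebraic curvature tensor. -/
def ric (T : Fin n → Fin n → Fin n → Fin n → ℝ) (i j : Fin n) : ℝ :=
  ∑ a, T a i j a

/-- Scalar curvature (double trace). -/
def scal (T : Fin n → Fin n → Fin n → Fin n → ℝ) : ℝ := ∑ i, ric T i i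

/-- `|R|² = Σ R_{abcd}²`. -/
def normSq (T : Fin n → Fin n → Fin n → Fin n → ℝ) : ℝ :=
  ∑ a, ∑ b, ∑ c, ∑ d, (T a b c d) ^ 2

/-- `R_{iabc}R_{jabc}`. -/
def RR2 (T : Fin n → Fin n → Fin n → Fin n → ℝ) (i j : Fin n) : ℝ :=
  ∑ a, ∑ b, ∑ c, T i a b c * T j a b c

/-- `R̂ = R_{abcd}R_{abuv}R_{cduv}`. -/
def Rhat (T : Fin n → Fin n → Fin n → Fin n → ℝ) : ℝ :=
  ∑ a, ∑ b, ∑ c, ∑ d, ∑ u, ∑ v, T a b c d * T a b u v * T c d u v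

/-- `R̊ = R_{abcd}R_{aucv}R_{budv}`. -/
def Rring (T : Fin n → Fin n → Fin n → Fin n → ℝ) : ℝ :=
  ∑ a, ∑ b, ∑ c, ∑ d, ∑ u, ∑ v, T a b c d * T a u c v * T b u d v

/-- `R̂_{ij} = R_{ibac}R_{jbuv}R_{acuv}`. -/
def RhatT (T : Fin n → Fin n → Fin n → Fin n → ℝ) (i j : Fin n) : ℝ :=
  ∑ a, ∑ b, ∑ c, ∑ u, ∑ v, T i b a c * T j b u v * T a c u v

/-- `R̊_{ij} = R_{iabc}R_{jubv}R_{aucv}`. -/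
def RringT (T : Fin n → Fin n → Fin n → Fin n → ℝ) (i j : Fin n) : ℝ :=
  ∑ a, ∑ b, ∑ c, ∑ u, ∑ v, T i a b c * T j u b v * T a u c v

end Alg

/-- Elementary antisymmetric 2-tensor `(e^p ∧ e^q)_{ij}`. -/
def E2 {n : ℕ} (p q i j : Fin n) : ℝ := kd p i * kd q j - kd q i * kd p j

/-- The Nikolayevsky algebraic curvature tensor on `ℝ⁵` with parameters `μ,ν`:
`R₁₂₁₂=R₁₃₁₃=R₂₃₂₃=R₂₄₂₄=R₃₄₃₄=μ−ν`, `R₁₄₁₄=μ−4ν`, `R₁₅₁₅=R₄₅₄₅=μ`,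
`R₂₅₂₅=R₃₅₃₅=μ−3ν`, `R₁₂₃₄=ν`, `R₁₂₃₅=√3ν`, `R₁₃₂₄=−ν`, `R₁₃₂₅=√3ν`,
`R₁₄₂₃=−2ν`, `R₂₄₂₅=√3ν`, `R₃₄₃₅=−√3ν`, all other components vanishing up to
the curvature symmetries. -/
noncomputable def nikR (μ ν : ℝ) (i j k l : Fin 5) : ℝ :=
  (μ - ν) * (E2 0 1 i j * E2 0 1 k l + E2 0 2 i j * E2 0 2 k l +
    E2 1 2 i j * E2 1 2 k l + E2 1 3 i j * E2 1 3 k l + E2 2 3 i j * E2 2 3 k l) +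
  (μ - 4 * ν) * (E2 0 3 i j * E2 0 3 k l) +
  μ * (E2 0 4 i j * E2 0 4 k l + E2 3 4 i j * E2 3 4 k l) +
  (μ - 3 * ν) * (E2 1 4 i j * E2 1 4 k l + E2 2 4 i j * E2 2 4 k l) +
  ν * (E2 0 1 i j * E2 2 3 k l + E2 2 3 i j * E2 0 1 k l) +
  Real.sqrt 3 * ν * (E2 0 1 i j * E2 2 4 k l + E2 2 4 i j * E2 0 1 k l) +
  (-ν) * (E2 0 2 i j * E2 1 3 k l + E2 1 3 i j * E2 0 2 k l) +
  Real.sqrt 3 * ν * (E2 0 2 i j * E2 1 4 k l + E2 1 4 i j * E2 0 2 k l) +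
  (-2 * ν) * (E2 0 3 i j * E2 1 2 k l + E2 1 2 i j * E2 0 3 k l) +
  Real.sqrt 3 * ν * (E2 1 3 i j * E2 1 4 k l + E2 1 4 i j * E2 1 3 k l) +
  (- (Real.sqrt 3 * ν)) * (E2 2 3 i j * E2 2 4 k l + E2 2 4 i j * E2 2 3 k l)

namespace Alg

variable {n : ℕ}

theorem normSq_eq_sum_RR2 (T : Fin n → Fin n → Fin n → Fin n → ℝ) :
    normSq T = ∑ i, RR2 T i i := by
  simp only [normSq, RR2, sq]

theorem normSq_eq_of_RR2_eq_mul_kd {T : Fin n → Fin n → Fin n → Fin n → ℝ} {c : ℝ}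
    (h : ∀ i j, RR2 T i j = c * kd i j) : normSq T = n * c := by
  simp [normSq_eq_sum_RR2, h, kd]

end Alg

theorem nikR_scal (μ ν : ℝ) : Alg.scal (nikR μ ν) = -20 * μ + 30 * ν := by
  simp [Alg.scal, Alg.ric, nikR, E2, kd, Fin.sum_univ_five]
  ring

set_option maxHeartbeats 2000000 in
theorem nikR_RR2 (μ ν : ℝ) (i j : Fin 5) :
    Alg.RR2 (nikR μ ν) i j = (8 * μ ^ 2 - 24 * μ * ν + 60 * ν ^ 2) * kd i j := by
  fin_cases i <;> fin_cases j <;> simp [Alg.RR2, nikR, E2, kd, Fin.sum_univ_five] <;> ring_nf <;>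
    simp only [Nat.ofNat_nonneg, Real.sq_sqrt] <;> ring

/-- for the Nikolayevsky curvature tensor, `τ = −20μ + 30ν`,
`R_{iabc}R_{jabc} = (8μ² − 24μν + 60ν²)δ_{ij}` and hence
`|R|² = 40μ² − 120μν + 300ν²`. -/
theorem nikolayevsky_scal_RR2 (μ ν : ℝ) :
    Alg.scal (nikR μ ν) = -20 * μ + 30 * ν ∧
    (∀ i j : Fin 5,
      Alg.RR2 (nikR μ ν) i j = (8 * μ ^ 2 - 24 * μ * ν + 60 * ν ^ 2) * kd i j) ∧
    Alg.normSq (nikR μ ν) = 40 * μ ^ 2 - 120 * μ * ν + 300 * ν ^ 2 := by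
  refine ⟨nikR_scal μ ν, nikR_RR2 μ ν, ?_⟩
  rw [Alg.normSq_eq_of_RR2_eq_mul_kd (nikR_RR2 μ ν)]
  push_cast
  ring
end
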